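/- arXiv:0710.3792 — 2 statements merged into one kernel-verified Lean document; each statement's English description precedes it below -/
import Mathlib

section
/- Let (X,μ) be a connected weighted graph with bounded row sums, and let {X_n} be a sequence of finite subsets of X with X_n ⊆ X_{n+1}, ⋃_n X_n = X, and each (X_n, ₙμ) connected, where ₙμ is the restriction of μ to X_n × X_n. Let {(Y_n, μ_n)} be a sequence of connected weighted graphs with X_n ⊆ Y_n ⊆ X, μ_n(x,y) ≤ μ(x,y) for all n and all x,y ∈ Y_n (extending μ_n by 0 outside Y_n × Y_n), and μ_n(x,y) → μ(x,y) as n → ∞ for all x,y ∈ X. Then R(Y_n, μ_n) ≥ R_μ for every n, and R(Y_n, μ_n) → R_μ as n → ∞; equivalently, the strong survival critical parameters satisfy λ_s(Y_n,μ_n) ≥ λ_s(X,μ) and λ_s(Y_n,μ_n) → λ_s(X,μ). -/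
open Filter MeasureTheory ProbabilityTheory
open scoped ENNReal NNReal

/-- `n`-step weights (matrix powers) of a weight kernel `μ` on a countable set. -/
noncomputable def matPow {X : Type*} [DecidableEq X] (μ : X → X → ℝ≥0∞) :
    ℕ → X → X → ℝ≥0∞
  | 0, x, y => if x = y then 1 else 0
  | n + 1, x, y => ∑' z, matPow μ n x z * μ z y

/-- `(X, μ)` has bounded row sums. -/
def bddRows {X : Type*} (μ : X → X → ℝ≥0∞) : Prop :=
  ∃ K : ℝ≥0∞, K ≠ ⊤ ∧ ∀ x, ∑' y, μ x y ≤ K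

/-- `(X, μ)` is connected. -/
def connectedW {X : Type*} [DecidableEq X] (μ : X → X → ℝ≥0∞) : Prop :=
  ∀ x y, ∃ n, 0 < n ∧ 0 < matPow μ n x y

/-- `limsup_n (μ^{(n)}(x,y))^{1/n}`, the reciprocal of the convergence parameter. -/
noncomputable def lsRoot {X : Type*} [DecidableEq X] (μ : X → X → ℝ≥0∞) (x y : X) : ℝ≥0∞ :=
  Filter.limsup (fun n : ℕ => matPow μ n x y ^ (n : ℝ)⁻¹) Filter.atTop

/-- The convergence parameter `R = 1 / limsup_n (μ^{(n)}(x,y))^{1/n}`. -/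
noncomputable def convR {X : Type*} [DecidableEq X] (μ : X → X → ℝ≥0∞) (x y : X) : ℝ≥0∞ :=
  (lsRoot μ x y)⁻¹

open Classical in
/-- Restriction of a weight kernel to a subset (extended by `0`). -/
noncomputable def restrictW {X : Type*} (μ : X → X → ℝ≥0∞) (A : Set X) : X → X → ℝ≥0∞ :=
  fun x y => if x ∈ A ∧ y ∈ A then μ x y else 0

/-! Since `μ_n ≤ μ`, matrix powers give `R(Y_n, μ_n) ≥ R_μ`. For the convergence, Fatou's lemma
gives `μ^{(k)}(x,x) ≤ liminf_n μ_n^{(k)}(x,x)` for every `k`, and since diagonal entries are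
supermultiplicative, every root `(μ^{(k)}(x,x))^{1/k}` is a lower bound for
`limsup_k (μ^{(k)}(x,x))^{1/k}`; so this limsup is lower semicontinuous along `μ_n → μ`.
Connectivity moves this off the diagonal: a `μ`-path of positive weight from `x` to `y` keeps
positive `μ_n`-weight for large `n` (Fatou again), and prepending and appending paths of positive
weight changes the `k`-step weights by at most a constant factor and a shift in `k`, which the
`k`-th roots do not see. -/

theorem ENNReal.tsum_liminf_le_liminf_tsum {ι : Type*} (f : ℕ → ι → ℝ≥0∞) :
    ∑' i, liminf (fun n => f n i) atTop ≤ liminf (fun n => ∑' i, f n i) atTop := by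
  let _ : MeasurableSpace ι := ⊤
  have : MeasurableSingletonClass ι := ⟨fun _ => trivial⟩
  simpa only [lintegral_count] using
    lintegral_liminf_le (μ := Measure.count) (f := f) fun _ => measurable_from_top

theorem ENNReal.limsup_root_le_of_eventually_le_mul_pow {a : ℕ → ℝ≥0∞} {D r : ℝ≥0∞}
    (hD : D ≠ ⊤) (hr : r ≠ 0) (h : ∀ᶠ k in atTop, a k ≤ D * r ^ k) :
    limsup (fun k : ℕ => a k ^ (k : ℝ)⁻¹) atTop ≤ r := by
  rcases eq_or_ne r ⊤ with rfl | hr_top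
  · exact le_top
  refine le_of_forall_gt_imp_ge_of_dense fun r' hrr' => limsup_le_of_le (by isBoundedDefault) ?_
  have hy : 1 < r' / r := by
    rwa [ENNReal.lt_div_iff_mul_lt (.inl hr) (.inl hr_top), one_mul]
  filter_upwards [h, ENNReal.eventually_pow_one_div_le hD hy, eventually_ne_atTop 0]
    with k hk hDk hk0
  calc a k ^ (k : ℝ)⁻¹ ≤ (D * r ^ k) ^ (k : ℝ)⁻¹ := by gcongr
    _ = D ^ (1 / (k : ℝ)) * r := by
      rw [ENNReal.mul_rpow_of_nonneg _ _ (by positivity), ENNReal.pow_rpow_inv_natCast hk0,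
        one_div]
    _ ≤ r' / r * r := by gcongr
    _ = r' := ENNReal.div_mul_cancel hr hr_top

theorem ENNReal.limsup_root_le_of_mul_le_shift {a b : ℕ → ℝ≥0∞} {C : ℝ≥0∞} (hC : C ≠ 0)
    {s : ℕ} (hab : ∀ k, C * a k ≤ b (k + s)) :
    limsup (fun k : ℕ => a k ^ (k : ℝ)⁻¹) atTop ≤ limsup (fun m : ℕ => b m ^ (m : ℝ)⁻¹) atTop := by
  refine le_of_forall_gt_imp_ge_of_dense fun r hr => ?_
  rcases eq_or_ne r ⊤ with rfl | hr_top
  · exact le_top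
  set c := min C 1
  have hc0 : c ≠ 0 := by simp [c, hC]
  have hc_top : c ≠ ⊤ := (min_le_right C 1).trans_lt ENNReal.one_lt_top |>.ne
  have hb : ∀ᶠ m in atTop, b m ≤ r ^ m := by
    filter_upwards [eventually_lt_of_limsup_lt hr, eventually_ne_atTop 0] with m hm hm0
    rw [← ENNReal.rpow_inv_natCast_pow hm0 (b m)]
    exact pow_le_pow_left' hm.le m
  refine ENNReal.limsup_root_le_of_eventually_le_mul_pow (D := c⁻¹ * r ^ s)
    (ENNReal.mul_ne_top (ENNReal.inv_ne_top.2 hc0) (ENNReal.pow_ne_top hr_top))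
    (ne_bot_of_gt hr) ?_
  filter_upwards [(tendsto_add_atTop_nat s).eventually hb] with k hk
  rw [mul_assoc, ← pow_add, add_comm s, ← ENNReal.div_eq_inv_mul,
    ENNReal.le_div_iff_mul_le (.inl hc0) (.inl hc_top), mul_comm]
  calc c * a k ≤ C * a k := by gcongr; exact min_le_left C 1
    _ ≤ b (k + s) := hab k
    _ ≤ r ^ (k + s) := hk

section matPow

variable {X : Type*} [DecidableEq X]

theorem matPow_mono {κ κ' : X → X → ℝ≥0∞} (h : ∀ x y, κ x y ≤ κ' x y) (k : ℕ) (x y : X) :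
    matPow κ k x y ≤ matPow κ' k x y := by
  induction k generalizing y with
  | zero => exact le_rfl
  | succ k ih => exact ENNReal.tsum_le_tsum fun z => mul_le_mul' (ih z) (h z y)

theorem matPow_zero_self_ne_zero (κ : X → X → ℝ≥0∞) (x : X) : matPow κ 0 x x ≠ 0 := by
  simp [matPow]

theorem matPow_add (κ : X → X → ℝ≥0∞) (p q : ℕ) (x y : X) :
    matPow κ (p + q) x y = ∑' z, matPow κ p x z * matPow κ q z y := by
  induction q generalizing y with
  | zero =>
    rw [tsum_eq_single y fun z hz => by simp [matPow, hz]]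
    simp [matPow]
  | succ q ih =>
    calc matPow κ (p + q + 1) x y = ∑' w, ∑' z, matPow κ p x z * (matPow κ q z w * κ w y) := by
          simp only [matPow, ih, ← ENNReal.tsum_mul_right, mul_assoc]
      _ = ∑' z, matPow κ p x z * matPow κ (q + 1) z y := by
          rw [ENNReal.tsum_comm]
          simp only [matPow, ENNReal.tsum_mul_left]

theorem matPow_mul_le_matPow_add (κ : X → X → ℝ≥0∞) (p q : ℕ) (x y z : X) :
    matPow κ p x y * matPow κ q y z ≤ matPow κ (p + q) x z :=
  (matPow_add κ p q x z).symm ▸ ENNReal.le_tsum y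

theorem matPow_diag_pow_le (κ : X → X → ℝ≥0∞) (k j : ℕ) (x : X) :
    matPow κ k x x ^ j ≤ matPow κ (k * j) x x := by
  induction j with
  | zero => simp [matPow]
  | succ j ih =>
    calc matPow κ k x x ^ (j + 1) ≤ matPow κ (k * j) x x * matPow κ k x x := by
          rw [pow_succ]; gcongr
      _ ≤ matPow κ (k * (j + 1)) x x := matPow_mul_le_matPow_add κ _ _ x x x

theorem matPow_le_liminf_matPow {μ : X → X → ℝ≥0∞} {ν : ℕ → X → X → ℝ≥0∞}
    (hlim : ∀ x y, Tendsto (fun n => ν n x y) atTop (nhds (μ x y))) (k : ℕ) (x y : X) :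
    matPow μ k x y ≤ liminf (fun n => matPow (ν n) k x y) atTop := by
  induction k generalizing y with
  | zero => simp [matPow]
  | succ k ih =>
    calc matPow μ (k + 1) x y
        ≤ ∑' z, liminf (fun n => matPow (ν n) k x z * ν n z y) atTop :=
          ENNReal.tsum_le_tsum fun z => calc
            matPow μ k x z * μ z y
                ≤ liminf (fun n => matPow (ν n) k x z) atTop * liminf (fun n => ν n z y) atTop := by
              rw [(hlim z y).liminf_eq]; exact mul_le_mul_left (ih z) _
            _ ≤ _ := ENNReal.le_liminf_mul
      _ ≤ liminf (fun n => matPow (ν n) (k + 1) x y) atTop :=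
          ENNReal.tsum_liminf_le_liminf_tsum _

end matPow

section lsRoot

variable {X : Type*} [DecidableEq X]

theorem lsRoot_mono {κ κ' : X → X → ℝ≥0∞} (h : ∀ x y, κ x y ≤ κ' x y) (x y : X) :
    lsRoot κ x y ≤ lsRoot κ' x y :=
  limsup_le_limsup (.of_forall fun k => ENNReal.rpow_le_rpow (matPow_mono h k x y) (by positivity))

theorem matPow_root_le_lsRoot (κ : X → X → ℝ≥0∞) (x : X) {k : ℕ} (hk : k ≠ 0) :
    matPow κ k x x ^ (k : ℝ)⁻¹ ≤ lsRoot κ x x := by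
  refine le_limsup_of_frequently_le (frequently_atTop.2 fun N => ⟨k * (N + 1), ?_, ?_⟩)
    (by isBoundedDefault)
  · nlinarith [Nat.pos_of_ne_zero hk]
  · calc matPow κ k x x ^ (k : ℝ)⁻¹
          = (matPow κ k x x ^ (N + 1)) ^ ((k * (N + 1) : ℕ) : ℝ)⁻¹ := by
            rw [← ENNReal.rpow_natCast, ← ENNReal.rpow_mul]
            congr 1
            push_cast
            field_simp
      _ ≤ matPow κ (k * (N + 1)) x x ^ ((k * (N + 1) : ℕ) : ℝ)⁻¹ := by
            gcongr; exact matPow_diag_pow_le κ k (N + 1) x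

theorem lsRoot_le_lsRoot_of_matPow_ne_zero (κ : X → X → ℝ≥0∞) {x y x' y' : X} {p q : ℕ}
    (hp : matPow κ p x' x ≠ 0) (hq : matPow κ q y y' ≠ 0) :
    lsRoot κ x y ≤ lsRoot κ x' y' :=
  ENNReal.limsup_root_le_of_mul_le_shift (mul_ne_zero hp hq) (s := p + q) fun k =>
    calc matPow κ p x' x * matPow κ q y y' * matPow κ k x y
        = matPow κ p x' x * (matPow κ k x y * matPow κ q y y') := by ring
      _ ≤ matPow κ (p + (k + q)) x' y' := by
          grw [matPow_mul_le_matPow_add κ k q x y y', matPow_mul_le_matPow_add]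
      _ = matPow κ (k + (p + q)) x' y' := by rw [← add_assoc, add_comm p, add_assoc]

theorem lsRoot_diag_le_liminf {μ : X → X → ℝ≥0∞} {ν : ℕ → X → X → ℝ≥0∞}
    (hlim : ∀ x y, Tendsto (fun n => ν n x y) atTop (nhds (μ x y))) (x : X) :
    lsRoot μ x x ≤ liminf (fun n => lsRoot (ν n) x x) atTop := by
  refine limsup_le_of_le (by isBoundedDefault) ?_
  filter_upwards [eventually_ne_atTop 0] with k hk
  have hk' : 0 < (k : ℝ)⁻¹ := by positivity
  calc matPow μ k x x ^ (k : ℝ)⁻¹ ≤ liminf (fun n => matPow (ν n) k x x) atTop ^ (k : ℝ)⁻¹ := by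
        gcongr; exact matPow_le_liminf_matPow hlim k x x
    _ = liminf (fun n => matPow (ν n) k x x ^ (k : ℝ)⁻¹) atTop :=
        (ENNReal.orderIsoRpow _ hk').liminf_apply
    _ ≤ liminf (fun n => lsRoot (ν n) x x) atTop :=
        liminf_le_liminf (.of_forall fun n => matPow_root_le_lsRoot (ν n) x hk)

theorem tendsto_lsRoot {μ : X → X → ℝ≥0∞} {ν : ℕ → X → X → ℝ≥0∞} (hconn : connectedW μ)
    (hle : ∀ n x y, ν n x y ≤ μ x y)
    (hlim : ∀ x y, Tendsto (fun n => ν n x y) atTop (nhds (μ x y))) (x y : X) :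
    Tendsto (fun n => lsRoot (ν n) x y) atTop (nhds (lsRoot μ x y)) := by
  obtain ⟨p, -, hp⟩ := hconn x y
  obtain ⟨q, -, hq⟩ := hconn y x
  have hpath : ∀ᶠ n in atTop, matPow (ν n) p x y ≠ 0 :=
    (eventually_lt_of_lt_liminf (hp.trans_le (matPow_le_liminf_matPow hlim p x y))).mono
      fun _ h => h.ne'
  refine tendsto_of_le_liminf_of_limsup_le ?_
    (limsup_le_of_le (by isBoundedDefault) (.of_forall fun n => lsRoot_mono (hle n) x y))
  calc lsRoot μ x y ≤ lsRoot μ x x :=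
        lsRoot_le_lsRoot_of_matPow_ne_zero μ (matPow_zero_self_ne_zero μ x) hq.ne'
    _ ≤ liminf (fun n => lsRoot (ν n) x x) atTop := lsRoot_diag_le_liminf hlim x
    _ ≤ liminf (fun n => lsRoot (ν n) x y) atTop :=
        liminf_le_liminf (hpath.mono fun n hn =>
          lsRoot_le_lsRoot_of_matPow_ne_zero (ν n) (matPow_zero_self_ne_zero (ν n) x) hn)

end lsRoot

theorem strong_critical_parameter_spatial_approximation_general
    {X : Type*} [DecidableEq X]
    (μ : X → X → ℝ≥0∞) (hconn : connectedW μ)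
    (T : ℕ → Set X) (ν : ℕ → X → X → ℝ≥0∞)
    (hle : ∀ n x y, ν n x y ≤ μ x y)
    (hlim : ∀ x y, Tendsto (fun n => ν n x y) atTop (nhds (μ x y))) :
    (∀ n, ∀ x ∈ T n, ∀ y ∈ T n, convR μ x y ≤ convR (ν n) x y) ∧
    (∀ x y : X, Tendsto (fun n => convR (ν n) x y) atTop (nhds (convR μ x y))) :=
  ⟨fun n x _ y _ => ENNReal.inv_le_inv.2 (lsRoot_mono (hle n) x y),
    fun x y => (tendsto_lsRoot hconn hle hlim x y).inv⟩

/-- Theorem 3.2: spatial approximation of the strong critical parameter.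
If `X_n ⊆ Y_n`, `μ_n ≤ μ`, `μ_n → μ` pointwise and all graphs involved are connected, then
`λ_s(Y_n, μ_n) = R(Y_n, μ_n) ≥ R_μ = λ_s(X, μ)` and `R(Y_n, μ_n) → R_μ` as `n → ∞`. -/
theorem strong_critical_parameter_spatial_approximation
    {X : Type*} [Countable X] [DecidableEq X]
    (μ : X → X → ℝ≥0∞) (hbdd : bddRows μ) (hconn : connectedW μ)
    (S : ℕ → Set X) (hfin : ∀ n, (S n).Finite) (hmono : ∀ n, S n ⊆ S (n + 1))
    (hcover : ⋃ n, S n = Set.univ)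
    (hconnS : ∀ n, ∀ x ∈ S n, ∀ y ∈ S n,
      ∃ k, 0 < k ∧ 0 < matPow (restrictW μ (S n)) k x y)
    (T : ℕ → Set X) (ν : ℕ → X → X → ℝ≥0∞)
    (hST : ∀ n, S n ⊆ T n)
    (hsupp : ∀ n x y, ¬(x ∈ T n ∧ y ∈ T n) → ν n x y = 0)
    (hle : ∀ n x y, ν n x y ≤ μ x y)
    (hlim : ∀ x y, Tendsto (fun n => ν n x y) atTop (nhds (μ x y)))
    (hconnT : ∀ n, ∀ x ∈ T n, ∀ y ∈ T n, ∃ k, 0 < k ∧ 0 < matPow (ν n) k x y) :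
    (∀ n, ∀ x ∈ T n, ∀ y ∈ T n, convR μ x y ≤ convR (ν n) x y) ∧
    (∀ x y : X, Tendsto (fun n => convR (ν n) x y) atTop (nhds (convR μ x y))) :=
  strong_critical_parameter_spatial_approximation_general μ hconn T ν hle hlim
end

section
/- Let (X,μ) be a weighted graph with bounded row sums, fix x₀, x ∈ X and λ > 0, and define H(t) := e^{−t} ∑_{n=0}^∞ μ^{(n)}(x₀,x) (λt)^n / n! for t ≥ 0 (this equals the expected number of particles at site x at time t of the λ-branching random walk on (X,μ) started from a single particle at x₀). If λ · limsup_{n→∞} (μ^{(n)}(x₀,x))^{1/n} < 1 (i.e. λ < R_μ), then H(t) → 0 as t → +∞. -/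
open Filter MeasureTheory ProbabilityTheory
open scoped ENNReal NNReal

/-- The expected number of particles at site `x` at time `t` of the `λ`-branching random
walk on `(X, μ)` started from one particle at `x₀`:
`H(t) = e^{-t} ∑_{n} μ^{(n)}(x₀, x) (λ t)^n / n!`. -/
noncomputable def expParticles {X : Type*} [DecidableEq X] (μ : X → X → ℝ≥0∞)
    (lam : ℝ) (x₀ x : X) (t : ℝ) : ℝ≥0∞ :=
  ENNReal.ofReal (Real.exp (-t)) *
    ∑' n : ℕ, matPow μ n x₀ x * ENNReal.ofReal (lam * t) ^ n / (Nat.factorial n : ℝ≥0∞)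


/-!
Put `b n = μ⁽ⁿ⁾(x₀, x) λⁿ`. Bounded row sums make every `b n` finite, and the root test
`limsup (b n)^{1/n} < r < 1` then gives `b n ≤ C rⁿ` for all `n`. Hence
`H(t) ≤ C e^{-t} ∑ (r t)ⁿ / n! = C e^{(r - 1) t} → 0`.
-/

section matPow

variable {X : Type*} [DecidableEq X] {μ : X → X → ℝ≥0∞}

lemma tsum_matPow_le_pow {K : ℝ≥0∞} (hK : ∀ x, ∑' y, μ x y ≤ K) (n : ℕ) (x : X) :
    ∑' y, matPow μ n x y ≤ K ^ n := by
  induction n generalizing x with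
  | zero => simp [matPow]
  | succ n ih =>
    calc ∑' y, matPow μ (n + 1) x y = ∑' z, matPow μ n x z * ∑' y, μ z y := by
          simp only [matPow]
          rw [ENNReal.tsum_comm]
          simp only [ENNReal.tsum_mul_left]
      _ ≤ ∑' z, matPow μ n x z * K := by gcongr with z; exact hK z
      _ = (∑' z, matPow μ n x z) * K := ENNReal.tsum_mul_right
      _ ≤ K ^ n * K := by gcongr; exact ih x
      _ = K ^ (n + 1) := (pow_succ K n).symm

lemma matPow_ne_top (hbdd : bddRows μ) (n : ℕ) (x y : X) : matPow μ n x y ≠ ⊤ := by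
  obtain ⟨K, hK_ne_top, hK⟩ := hbdd
  exact ne_top_of_le_ne_top (ENNReal.pow_ne_top hK_ne_top)
    ((ENNReal.le_tsum y).trans (tsum_matPow_le_pow hK n x))

end matPow

namespace ENNReal

lemma limsup_mul_pow_rpow_inv {a : ℕ → ℝ≥0∞} {c : ℝ≥0∞} (hc : c ≠ ⊤) :
    limsup (fun n : ℕ => (a n * c ^ n) ^ (n : ℝ)⁻¹) atTop =
      c * limsup (fun n : ℕ => a n ^ (n : ℝ)⁻¹) atTop := by
  rw [← limsup_const_mul_of_ne_top hc]
  refine limsup_congr ((eventually_ne_atTop 0).mono fun n hn => ?_)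
  rw [mul_rpow_of_nonneg _ _ (by positivity), pow_rpow_inv_natCast hn, mul_comm]

lemma exists_le_mul_pow_of_limsup_rpow_inv_lt {b : ℕ → ℝ≥0∞} (hb : ∀ n, b n ≠ ⊤) {r : ℝ≥0}
    (hr : limsup (fun n : ℕ => b n ^ (n : ℝ)⁻¹) atTop < r) :
    ∃ C : ℝ≥0, ∀ n, b n ≤ C * r ^ n := by
  have hr0 : (r : ℝ≥0∞) ≠ 0 := (hr.trans_le' bot_le).ne'
  obtain ⟨N, hN⟩ :=
    ((eventually_lt_of_limsup_lt hr).and (eventually_ne_atTop 0)).exists_forall_of_atTop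
  set S := ∑ n ∈ Finset.range N, b n / r ^ n
  have hS : S ≠ ⊤ := sum_ne_top.mpr fun n _ => div_ne_top (hb n) (pow_ne_zero n hr0)
  refine ⟨S.toNNReal + 1, fun n => ?_⟩
  rw [coe_add, coe_toNNReal hS, coe_one]
  rcases lt_or_ge n N with hn | hn
  · calc b n = b n / r ^ n * r ^ n :=
          (ENNReal.div_mul_cancel (pow_ne_zero n hr0) (pow_ne_top coe_ne_top)).symm
      _ ≤ (S + 1) * r ^ n := by
          gcongr
          exact (Finset.single_le_sum (f := fun m => b m / r ^ m) (fun m _ => zero_le)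
            (Finset.mem_range.mpr hn)).trans le_self_add
  · obtain ⟨hlt, hn0⟩ := hN n hn
    calc b n = (b n ^ (n : ℝ)⁻¹) ^ n := (rpow_inv_natCast_pow hn0 _).symm
      _ ≤ (r : ℝ≥0∞) ^ n := by gcongr
      _ ≤ (S + 1) * r ^ n := le_mul_of_one_le_left' le_add_self

lemma tsum_ofReal_pow_div_factorial {s : ℝ} (hs : 0 ≤ s) :
    ∑' n : ℕ, ENNReal.ofReal s ^ n / (n.factorial : ℝ≥0∞) = ENNReal.ofReal (Real.exp s) := by
  have hterm : ∀ n : ℕ, ENNReal.ofReal s ^ n / (n.factorial : ℝ≥0∞) =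
      ENNReal.ofReal (s ^ n / n.factorial) := fun n => by
    rw [ofReal_div_of_pos (by positivity), ofReal_pow hs, ofReal_natCast]
  simp only [hterm]
  rw [← ofReal_tsum_of_nonneg (fun n => by positivity) (Real.summable_pow_div_factorial s),
    Real.exp_eq_exp_ℝ, NormedSpace.exp_eq_tsum_div]

lemma tsum_mul_pow_div_factorial_le {b : ℕ → ℝ≥0∞} {C r : ℝ≥0} (hb : ∀ n, b n ≤ C * r ^ n)
    {t : ℝ} (ht : 0 ≤ t) :
    ∑' n : ℕ, b n * ENNReal.ofReal t ^ n / (n.factorial : ℝ≥0∞) ≤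
      C * ENNReal.ofReal (Real.exp (r * t)) := by
  rw [← tsum_ofReal_pow_div_factorial (by positivity), ← ENNReal.tsum_mul_left]
  refine ENNReal.tsum_le_tsum fun n => ?_
  simp only [ofReal_mul NNReal.zero_le_coe, ofReal_coe_nnreal, mul_pow, mul_div_assoc]
  rw [← mul_assoc]
  gcongr
  exact hb n

end ENNReal

lemma tendsto_exp_neg_mul_exp_mul_atTop {r : ℝ} (hr : r < 1) :
    Tendsto (fun t => Real.exp (-t) * Real.exp (r * t)) atTop (nhds 0) := by
  simp only [← Real.exp_add, show ∀ t : ℝ, -t + r * t = (r - 1) * t from fun t => by ring]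
  exact Real.tendsto_exp_atBot.comp (tendsto_id.const_mul_atTop_of_neg (by linarith))

theorem expParticles_tendsto_zero_of_subcritical_general
    {X : Type*} [Countable X] [DecidableEq X]
    (μ : X → X → ℝ≥0∞) (hbdd : bddRows μ)
    (x₀ x : X) (lam : ℝ)
    (hsub : ENNReal.ofReal lam * lsRoot μ x₀ x < 1) :
    Tendsto (expParticles μ lam x₀ x) atTop (nhds (0 : ℝ≥0∞)) := by
  set b : ℕ → ℝ≥0∞ := fun n => matPow μ n x₀ x * ENNReal.ofReal lam ^ n
  have hb_ne_top n : b n ≠ ⊤ := ENNReal.mul_ne_top (matPow_ne_top hbdd n x₀ x) (by simp)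
  have hb_root : limsup (fun n : ℕ => b n ^ (n : ℝ)⁻¹) atTop < 1 := by
    rwa [ENNReal.limsup_mul_pow_rpow_inv ENNReal.ofReal_ne_top]
  obtain ⟨r, hb_lt_r, hr_lt_one⟩ := exists_between hb_root
  lift r to ℝ≥0 using hr_lt_one.ne_top
  obtain ⟨C, hC⟩ := ENNReal.exists_le_mul_pow_of_limsup_rpow_inv_lt hb_ne_top hb_lt_r
  have hbound : ∀ᶠ t in atTop, expParticles μ lam x₀ x t ≤
      C * ENNReal.ofReal (Real.exp (-t) * Real.exp (r * t)) := by
    filter_upwards [eventually_ge_atTop 0] with t ht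
    have hH : expParticles μ lam x₀ x t = ENNReal.ofReal (Real.exp (-t)) *
        ∑' n : ℕ, b n * ENNReal.ofReal t ^ n / (n.factorial : ℝ≥0∞) := by
      simp only [expParticles, b, ENNReal.ofReal_mul' ht, mul_pow, mul_assoc]
    rw [hH, ENNReal.ofReal_mul (Real.exp_nonneg _), mul_left_comm]
    gcongr
    exact ENNReal.tsum_mul_pow_div_factorial_le hC ht
  have hlim := ENNReal.Tendsto.const_mul (a := C)
    (ENNReal.tendsto_ofReal (tendsto_exp_neg_mul_exp_mul_atTop (by exact_mod_cast hr_lt_one)))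
    (Or.inr ENNReal.coe_ne_top)
  rw [ENNReal.ofReal_zero, mul_zero] at hlim
  exact tendsto_of_tendsto_of_tendsto_of_le_of_le' tendsto_const_nhds hlim
    (Eventually.of_forall fun _ => zero_le) hbound

/-- Lemma 5.2, subcritical part: if `λ · limsup_n (μ^{(n)}(x₀,x))^{1/n} < 1`
(i.e. `λ < R_μ`) then the expected number of particles at `x` tends to `0`. -/
theorem expParticles_tendsto_zero_of_subcritical
    {X : Type*} [Countable X] [DecidableEq X]
    (μ : X → X → ℝ≥0∞) (hbdd : bddRows μ)
    (x₀ x : X) (lam : ℝ) (hlam : 0 < lam)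
    (hsub : ENNReal.ofReal lam * lsRoot μ x₀ x < 1) :
    Tendsto (expParticles μ lam x₀ x) atTop (nhds (0 : ℝ≥0∞)) :=
  expParticles_tendsto_zero_of_subcritical_general μ hbdd x₀ x lam hsub
end
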